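/- Let μ, ν be finitely supported probability distributions on X and R an equivalence relation on X. Then the following are equivalent: (1) for every equivalence class Q of R, μ[Q] = ν[Q]; (2) for every subset A ⊆ X, μ[A] ≤ ν[R(A)] and ν[A] ≤ μ[R(A)], where R(A) denotes the R-saturation of A. -/
import Mathlib


open scoped BigOperators

/-- A finitely supported probability distribution on `X`. -/
def IsFinDist {X : Type*} (ν : X → ℝ) : Prop :=
  (∀ x, 0 ≤ ν x ∧ ν x ≤ 1) ∧ (Function.support ν).Finite ∧ ∑ᶠ x, ν x = 1

theorem class_mass_eq_iff_saturation_bounds {X : Type*} (μ ν : X → ℝ)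
    (hμ : IsFinDist μ) (hν : IsFinDist ν)
    (R : X → X → Prop) (hR : Equivalence R) :
    (∀ x : X, (∑ᶠ y ∈ {y | R x y}, μ y) = ∑ᶠ y ∈ {y | R x y}, ν y) ↔
      (∀ A : Set X,
        (∑ᶠ x ∈ A, μ x) ≤ (∑ᶠ y ∈ {y | ∃ x ∈ A, R x y}, ν y) ∧
          (∑ᶠ x ∈ A, ν x) ≤ ∑ᶠ y ∈ {y | ∃ x ∈ A, R x y}, μ y) := by
  classical
  obtain ⟨hμ0, hμs, -⟩ := hμ
  obtain ⟨hν0, hνs, -⟩ := hν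
  set T : Finset X := (hμs.union hνs).toFinset with hT
  have hμT : Function.support μ ⊆ ↑T := by
    intro x hx; simp [hT, Set.Finite.mem_toFinset]; left; exact hx
  have hνT : Function.support ν ⊆ ↑T := by
    intro x hx; simp [hT, Set.Finite.mem_toFinset]; right; exact hx
  have key : ∀ (f : X → ℝ), Function.support f ⊆ ↑T → ∀ S : Set X,
      (∑ᶠ x ∈ S, f x) = ∑ x ∈ T.filter (· ∈ S), f x := by
    intro f hf S
    apply finsum_mem_eq_sum_of_inter_support_eq
    ext x
    simp only [Set.mem_inter_iff, Finset.coe_filter, Set.mem_setOf_eq,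
      Function.mem_support]
    constructor
    · rintro ⟨hS, hne⟩; exact ⟨⟨hf hne, hS⟩, hne⟩
    · rintro ⟨⟨_, hS⟩, hne⟩; exact ⟨hS, hne⟩
  constructor
  · -- forward
    intro h A
    set S : Set X := {y | ∃ x ∈ A, R x y} with hS
    have hAS : A ⊆ S := fun x hx => ⟨x, hx, hR.refl x⟩
    have hsat : ∀ x y, x ∈ S → R x y → y ∈ S := by
      rintro x y ⟨z, hz, hzx⟩ hxy; exact ⟨z, hz, hR.trans hzx hxy⟩
    -- grouping by classes
    letI s : Setoid X := ⟨R, hR⟩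
    have grp : ∀ (f : X → ℝ), Function.support f ⊆ ↑T →
        (∑ᶠ x ∈ S, f x) =
          ∑ q ∈ (T.filter (· ∈ S)).image (Quotient.mk s),
            ∑ᶠ y ∈ {y | R q.out y}, f y := by
      intro f hf
      rw [key f hf S]
      rw [← Finset.sum_fiberwise_of_maps_to (g := Quotient.mk s)
        (fun x hx => Finset.mem_image_of_mem _ hx) f]
      apply Finset.sum_congr rfl
      intro q hq
      rw [key f hf {y | R q.out y}]
      apply Finset.sum_congr
      · ext x
        simp only [Finset.mem_filter, Set.mem_setOf_eq]
        have hout : ∀ z : X, Quotient.mk s z = q ↔ R q.out z := by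
          intro z
          constructor
          · intro hz
            exact hR.symm (Quotient.exact (hz.trans (Quotient.out_eq q).symm))
          · intro hz
            exact (Quotient.sound (hR.symm hz)).trans (Quotient.out_eq q)
        obtain ⟨x0, hx0, hx0q⟩ := Finset.mem_image.mp hq
        simp only [Finset.mem_filter] at hx0
        constructor
        · rintro ⟨⟨hxT, _⟩, hxq⟩; exact ⟨hxT, (hout x).mp hxq⟩
        · rintro ⟨hxT, hxq⟩
          have hx0x : R x0 x := hR.trans (hR.symm ((hout x0).mp hx0q)) hxq
          exact ⟨⟨hxT, hsat x0 x hx0.2 hx0x⟩, (hout x).mpr hxq⟩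
      · intros; rfl
    have hSeq : (∑ᶠ y ∈ S, μ y) = ∑ᶠ y ∈ S, ν y := by
      rw [grp μ hμT, grp ν hνT]
      exact Finset.sum_congr rfl fun q _ => h q.out
    have hmono : ∀ (f : X → ℝ), Function.support f ⊆ ↑T → (∀ x, 0 ≤ f x) →
        (∑ᶠ x ∈ A, f x) ≤ ∑ᶠ y ∈ S, f y := by
      intro f hf hf0
      rw [key f hf A, key f hf S]
      apply Finset.sum_le_sum_of_subset_of_nonneg
      · intro x hx
        simp only [Finset.mem_filter] at hx ⊢
        exact ⟨hx.1, hAS hx.2⟩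
      · intros; exact hf0 _
    constructor
    · calc (∑ᶠ x ∈ A, μ x) ≤ ∑ᶠ y ∈ S, μ y := hmono μ hμT (fun x => (hμ0 x).1)
        _ = ∑ᶠ y ∈ S, ν y := hSeq
    · calc (∑ᶠ x ∈ A, ν x) ≤ ∑ᶠ y ∈ S, ν y := hmono ν hνT (fun x => (hν0 x).1)
        _ = ∑ᶠ y ∈ S, μ y := hSeq.symm
  · -- backward
    intro h x
    obtain ⟨h1, h2⟩ := h {y | R x y}
    have heq : {y | ∃ z ∈ {y | R x y}, R z y} = {y | R x y} := by
      ext y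
      simp only [Set.mem_setOf_eq]
      constructor
      · rintro ⟨z, hz1, hz2⟩; exact hR.trans hz1 hz2
      · intro hy; exact ⟨x, hR.refl x, hy⟩
    rw [heq] at h1 h2
    linarith
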